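/- arXiv:2505.10419 — 2 statements merged into one kernel-verified Lean document; each statement's English description precedes it below -/
import Mathlib

section
/- The function F(u) = 1 − 2·sinc(u/2)²/(1 + sinc(u)) is strictly monotonically increasing on the interval (0, 2]. -/
open Real

/-- Normalized sinc: `sinc(x) = sin(πx)/(πx)` for `x ≠ 0`, `sinc(0) = 1`. -/
noncomputable def nsinc (x : ℝ) : ℝ :=
  if x = 0 then 1 else Real.sin (π * x) / (π * x)

/-!
In the phase `y = πu/2 ∈ (0, π]` one has `F(u) = 1 - 2 sin² y / (y (y + sin y cos y))`. The
derivative of this ratio has the sign of `2y² cos y - y sin y - sin² y cos y`, which is negative on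
`(0, π)`: trivially where `cos y ≤ 0`, and for `y < π/2` by the Taylor bounds
`sin y > y - y³/6` and `tan y > y + y³/3`.
-/

open Set

lemma add_cube_div_three_lt_tan {x : ℝ} (hx₀ : 0 < x) (hx : x < π / 2) :
    x + x ^ 3 / 3 < tan x := by
  have hcos : ∀ y ∈ Ico 0 (π / 2), 0 < cos y := fun y hy =>
    cos_pos_of_mem_Ioo ⟨by linarith [hy.1, pi_pos], hy.2⟩
  have hderiv : ∀ y ∈ Ico 0 (π / 2), HasDerivAt (fun t => tan t - (t + t ^ 3 / 3))
      (tan y ^ 2 - y ^ 2) y := fun y hy => by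
    have h := (hasDerivAt_tan (hcos y hy).ne').sub
      ((hasDerivAt_id y).add ((hasDerivAt_pow 3 y).div_const 3))
    refine h.congr_deriv ?_
    rw [← inv_one_add_tan_sq (hcos y hy).ne']
    norm_num
  have hmono : StrictMonoOn (fun t => tan t - (t + t ^ 3 / 3)) (Ico 0 (π / 2)) := by
    refine strictMonoOn_of_hasDerivWithinAt_pos (convex_Ico 0 (π / 2))
      (fun y hy => (hderiv y hy).continuousAt.continuousWithinAt)
      (fun y hy => (hderiv y (interior_subset hy)).hasDerivWithinAt) fun y hy => ?_
    rw [interior_Ico] at hy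
    have := lt_tan hy.1 hy.2
    nlinarith [hy.1]
  have := hmono ⟨le_rfl, by positivity⟩ ⟨hx₀.le, hx⟩ hx₀
  simp only [tan_zero] at this
  linarith

lemma two_mul_sq_mul_cos_lt {y : ℝ} (hy₀ : 0 < y) (hy : y < π) :
    2 * y ^ 2 * cos y < y * sin y + sin y ^ 2 * cos y := by
  have hs : 0 < sin y := sin_pos_of_pos_of_lt_pi hy₀ hy
  rcases le_or_gt (cos y) 0 with hc | hc
  · have : sin y ^ 2 < y ^ 2 := sin_sq_lt_sq hy₀.ne'
    nlinarith [mul_pos hy₀ hs]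
  · have hyπ2 : y < π / 2 := by
      by_contra! h
      linarith [cos_nonpos_of_pi_div_two_le_of_le h (by linarith)]
    have hy2 : y ^ 2 < 4 := by nlinarith [pi_lt_four]
    have hsin := sin_gt_sub_cube hy₀
    have htan : cos y * (y + y ^ 3 / 3) < sin y := by
      have := mul_lt_mul_of_pos_left (add_cube_div_three_lt_tan hy₀ hyπ2) hc
      rwa [tan_eq_sin_div_cos, mul_div_cancel₀ _ hc.ne'] at this
    -- `y sin y + sin² y cos y > cos y (2y² + y⁶/36)`
    have hsub : 0 < y - y ^ 3 / 6 := by nlinarith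
    have hs2 : (y - y ^ 3 / 6) ^ 2 < sin y ^ 2 := by nlinarith
    nlinarith [mul_lt_mul_of_pos_left hs2 hc, mul_lt_mul_of_pos_left htan hy₀,
      mul_pos hc (pow_pos hy₀ 6)]

lemma add_sin_mul_cos_pos {y : ℝ} (hy : 0 < y) : 0 < y + sin y * cos y := by
  have hsc : |sin y * cos y| < y := by
    rw [abs_mul]
    calc |sin y| * |cos y| ≤ |sin y| := mul_le_of_le_one_right (abs_nonneg _) (abs_cos_le_one y)
      _ < |y| := abs_sin_lt_abs hy.ne'
      _ = y := abs_of_pos hy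
  linarith [neg_abs_le (sin y * cos y)]

noncomputable def sincRatio (y : ℝ) : ℝ := sin y ^ 2 / (y * (y + sin y * cos y))

lemma sincRatio_strictAntiOn : StrictAntiOn sincRatio (Ioc 0 π) := by
  have hderiv : ∀ y, 0 < y → HasDerivAt sincRatio
      ((2 * sin y * cos y * (y * (y + sin y * cos y)) - sin y ^ 2 *
        (2 * y + sin y * cos y + y * (cos y ^ 2 - sin y ^ 2))) /
        (y * (y + sin y * cos y)) ^ 2) y := fun y hy => by
    have hnum : HasDerivAt (fun t => sin t ^ 2) (2 * sin y * cos y) y :=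
      ((hasDerivAt_sin y).fun_pow 2).congr_deriv (by ring)
    have hden : HasDerivAt (fun t => t * (t + sin t * cos t))
        (2 * y + sin y * cos y + y * (cos y ^ 2 - sin y ^ 2)) y := by
      refine ((hasDerivAt_id' y).fun_mul ((hasDerivAt_id' y).fun_add
        ((hasDerivAt_sin y).fun_mul (hasDerivAt_cos y)))).congr_deriv ?_
      ring
    exact hnum.div hden (mul_pos hy (add_sin_mul_cos_pos hy)).ne'
  refine strictAntiOn_of_hasDerivWithinAt_neg (convex_Ioc 0 π)
    (fun y hy => (hderiv y hy.1).continuousAt.continuousWithinAt)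
    (fun y hy => (hderiv y (interior_subset hy).1).hasDerivWithinAt) fun y hy => ?_
  rw [interior_Ioc] at hy
  have hs := sin_pos_of_pos_of_lt_pi hy.1 hy.2
  have hkey := two_mul_sq_mul_cos_lt hy.1 hy.2
  refine div_neg_of_neg_of_pos ?_ (pow_pos (mul_pos hy.1 (add_sin_mul_cos_pos hy.1)) 2)
  have hnumerator : 2 * sin y * cos y * (y * (y + sin y * cos y)) - sin y ^ 2 *
      (2 * y + sin y * cos y + y * (cos y ^ 2 - sin y ^ 2)) =
      sin y * (2 * y ^ 2 * cos y - (y * sin y + sin y ^ 2 * cos y)) := by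
    linear_combination (y * sin y ^ 2) * sin_sq_add_cos_sq y
  rw [hnumerator]
  exact mul_neg_of_pos_of_neg hs (by linarith)

lemma one_sub_two_mul_nsinc_half_sq_div {u : ℝ} (hu : 0 < u) :
    1 - 2 * nsinc (u / 2) ^ 2 / (1 + nsinc u) = 1 - 2 * sincRatio (π * u / 2) := by
  set y := π * u / 2
  have hy₀ : 0 < y := by positivity
  have hhalf : π * (u / 2) = y := by ring
  have hfull : π * u = 2 * y := by ring
  rw [nsinc, nsinc, if_neg (by positivity), if_neg hu.ne', hhalf, hfull, sin_two_mul, sincRatio]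
  have := add_sin_mul_cos_pos hy₀
  field_simp

/-- The worst-case two-tap interpolation error
`F(u) = 1 − 2 sinc(u/2)²/(1 + sinc u)` is strictly increasing on `(0, 2]`. -/
theorem stmt_6 :
    StrictMonoOn (fun u : ℝ => 1 - 2 * nsinc (u / 2) ^ 2 / (1 + nsinc u))
      (Set.Ioc (0 : ℝ) 2) := by
  intro a ha b hb hab
  have hphase : ∀ u ∈ Ioc (0 : ℝ) 2, π * u / 2 ∈ Ioc 0 π := fun u hu =>
    ⟨div_pos (mul_pos pi_pos hu.1) two_pos, by nlinarith [pi_pos, hu.2]⟩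
  have := sincRatio_strictAntiOn (hphase a ha) (hphase b hb) (by gcongr)
  simp only [one_sub_two_mul_nsinc_half_sq_div ha.1, one_sub_two_mul_nsinc_half_sq_div hb.1]
  linarith
end

section
/- Let x(t) be a centered wide-sense stationary complex process with autocorrelation R_x(τ) = sinc(Bτ), let τ₀,…,τ_M and d₁,…,d_N be real delays, let α₀,…,α_M be independent complex random variables independent of x, with α_m centered of variance a_m² for m ≥ 1 and α₀ deterministic equal to a₀, and let y(t) = Σ_m α_m x(t−τ_m). For each m let w̃_m ∈ ℂ^N be the (deterministic) optimal Wiener weights for approximating x(t−τ_m) by (x(t−d₁),…,x(t−d_N)), with per-path MMSE ε̄²_m. Then the expectation over the channel coefficients of the total MMSE satisfies E_α[ min_w E|y(t) − Σ_n w_n x(t−d_n)|² ] = Σ_{m=0}^{M} a_m² ε̄²_m, where the inner minimum is over unconstrained w ∈ ℂ^N. -/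
open MeasureTheory ProbabilityTheory Real

/-!
In `L²(P)` the least mean-square error of approximating `Y` by combinations of the
`X n = x (-d n)` is `‖Q Y‖ ^ 2`, where `Q` is the orthogonal projection onto the orthogonal
complement of `span {X n}`; in particular `ε m = ‖Q (x (-τ m))‖ ^ 2`. As `Q` is linear, for a fixed
realisation of the coefficients the inner minimum is `‖∑ m, α m • Q (x (-τ m))‖ ^ 2`. Expanding
the square, the cross terms `E[conj (α m) * α k]`, `m ≠ k`, vanish: by independence they factor,
and of two distinct indices at least one is nonzero, so its coefficient is centred.
-/

open ComplexConjugate Submodule Set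

section InnerProductSpace

variable {𝕜 E ι : Type*} [RCLike 𝕜] [NormedAddCommGroup E] [InnerProductSpace 𝕜 E]

instance Submodule.finiteDimensional_span_range [Finite ι] (v : ι → E) :
    FiniteDimensional 𝕜 (span 𝕜 (range v)) :=
  FiniteDimensional.span_of_finite 𝕜 (finite_range v)

variable [Fintype ι]

theorem isLeast_norm_sub_sum_smul_sq (v : ι → E) (y : E) :
    IsLeast {e : ℝ | ∃ w : ι → 𝕜, e = ‖y - ∑ i, w i • v i‖ ^ 2}
      (‖(span 𝕜 (range v))ᗮ.starProjection y‖ ^ 2) := by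
  set S := span 𝕜 (range v)
  rw [starProjection_orthogonal_val]
  constructor
  · obtain ⟨w, hw⟩ := (mem_span_range_iff_exists_fun 𝕜).1 (S.starProjection_apply_mem y)
    exact ⟨w, by rw [hw]⟩
  · rintro _ ⟨w, rfl⟩
    have hw : ∑ i, w i • v i ∈ S := (mem_span_range_iff_exists_fun 𝕜).2 ⟨w, rfl⟩
    gcongr
    rw [starProjection_minimal]
    exact ciInf_le ⟨0, forall_mem_range.2 fun _ => norm_nonneg _⟩ (⟨_, hw⟩ : S)

theorem ofReal_norm_sum_smul_sq (c : ι → 𝕜) (v : ι → E) :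
    ((‖∑ i, c i • v i‖ ^ 2 : ℝ) : 𝕜) = ∑ i, ∑ j, conj (c i) * c j * inner 𝕜 (v i) (v j) := by
  rw [RCLike.ofReal_pow, ← inner_self_eq_norm_sq_to_K, sum_inner]
  simp only [inner_sum, inner_smul_left, inner_smul_right, mul_assoc, mul_left_comm]

end InnerProductSpace

section L2

variable {𝕜 Ω ι : Type*} [RCLike 𝕜] [MeasurableSpace Ω] {μ : Measure Ω}

theorem MeasureTheory.Lp.integral_norm_sq_eq {E : Type*} [NormedAddCommGroup E]
    [InnerProductSpace 𝕜 E] (F : Lp E 2 μ) {f : Ω → E} (hF : F =ᵐ[μ] f) :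
    ∫ ω, ‖f ω‖ ^ 2 ∂μ = ‖F‖ ^ 2 := by
  apply RCLike.ofReal_injective (K := 𝕜)
  rw [← integral_ofReal, RCLike.ofReal_pow, ← inner_self_eq_norm_sq_to_K, L2.inner_def]
  refine integral_congr_ae ?_
  filter_upwards [hF] with ω hω
  rw [hω, inner_self_eq_norm_sq_to_K, RCLike.ofReal_pow]

theorem MeasureTheory.Lp.coeFn_sum_smul_toLp [Fintype ι] (c : ι → 𝕜) {g : ι → Ω → 𝕜}
    (hg : ∀ i, MemLp (g i) 2 μ) :
    ⇑(∑ i, c i • (hg i).toLp (g i)) =ᵐ[μ] fun ω => ∑ i, c i * g i ω := by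
  have hsmul : ∀ᵐ ω ∂μ, ∀ i, (c i • (hg i).toLp (g i)) ω = c i * g i ω :=
    ae_all_iff.2 fun i => by
      filter_upwards [Lp.coeFn_smul (c i) ((hg i).toLp (g i)), (hg i).coeFn_toLp] with ω h₁ h₂
      simp [h₁, h₂]
  filter_upwards [Lp.coeFn_fun_finsetSum Finset.univ fun i => c i • (hg i).toLp (g i), hsmul]
    with ω h₁ h₂
  rw [h₁]
  exact Finset.sum_congr rfl fun i _ => h₂ i

theorem isLeast_integral_norm_sub_sum_mul_sq [Fintype ι] {g : ι → Ω → 𝕜}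
    (hg : ∀ i, MemLp (g i) 2 μ) (Y : Lp 𝕜 2 μ) {y : Ω → 𝕜} (hY : Y =ᵐ[μ] y) :
    IsLeast {e : ℝ | ∃ w : ι → 𝕜, e = ∫ ω, ‖y ω - ∑ i, w i * g i ω‖ ^ 2 ∂μ}
      (‖(span 𝕜 (range fun i => (hg i).toLp (g i)))ᗮ.starProjection Y‖ ^ 2) := by
  convert isLeast_norm_sub_sum_smul_sq (fun i => (hg i).toLp (g i)) Y using 1
  refine Set.ext fun e => exists_congr fun w => ?_
  rw [Lp.integral_norm_sq_eq (𝕜 := 𝕜) (Y - ∑ i, w i • (hg i).toLp (g i))]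
  filter_upwards [Lp.coeFn_sub Y (∑ i, w i • (hg i).toLp (g i)), hY,
    Lp.coeFn_sum_smul_toLp w hg] with ω h₁ h₂ h₃
  rw [h₁, Pi.sub_apply, h₂, h₃]

theorem integral_norm_sum_smul_sq {E : Type*} [NormedAddCommGroup E] [InnerProductSpace 𝕜 E]
    [Fintype ι] {α : ι → Ω → 𝕜} (hα : ∀ i, MemLp (α i) 2 μ)
    (huncorr : Pairwise fun i j => ∫ ω, conj (α i ω) * α j ω ∂μ = 0) (v : ι → E) :
    ∫ ω, ‖∑ i, α i ω • v i‖ ^ 2 ∂μ = ∑ i, (∫ ω, ‖α i ω‖ ^ 2 ∂μ) * ‖v i‖ ^ 2 := by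
  have hint : ∀ i j, Integrable (fun ω => conj (α i ω) * α j ω * inner 𝕜 (v i) (v j)) μ :=
    fun i j => ((hα i).star.integrable_mul (hα j)).mul_const _
  apply RCLike.ofReal_injective (K := 𝕜)
  calc ((∫ ω, ‖∑ i, α i ω • v i‖ ^ 2 ∂μ : ℝ) : 𝕜)
      = ∫ ω, ∑ i, ∑ j, conj (α i ω) * α j ω * inner 𝕜 (v i) (v j) ∂μ := by
        simp_rw [← integral_ofReal, ofReal_norm_sum_smul_sq]
    _ = ∑ i, ∑ j, (∫ ω, conj (α i ω) * α j ω ∂μ) * inner 𝕜 (v i) (v j) := by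
        rw [integral_finsetSum _ fun i _ => integrable_finsetSum _ fun j _ => hint i j]
        refine Finset.sum_congr rfl fun i _ => ?_
        rw [integral_finsetSum _ fun j _ => hint i j]
        simp_rw [integral_mul_const]
    _ = ∑ i, (∫ ω, conj (α i ω) * α i ω ∂μ) * inner 𝕜 (v i) (v i) := by
        refine Finset.sum_congr rfl fun i _ => Finset.sum_eq_single_of_mem i (Finset.mem_univ i)
          fun j _ hji => by rw [huncorr hji.symm, zero_mul]
    _ = _ := by
        push_cast
        simp_rw [RCLike.conj_mul, inner_self_eq_norm_sq_to_K, ← RCLike.ofReal_pow, integral_ofReal]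

end L2

theorem ProbabilityTheory.IndepFun.integral_conj_mul {𝕜 Ω : Type*} [RCLike 𝕜] [MeasurableSpace Ω]
    {μ : Measure Ω} {f g : Ω → 𝕜} (h : IndepFun f g μ) (hf : AEStronglyMeasurable f μ)
    (hg : AEStronglyMeasurable g μ) :
    ∫ ω, conj (f ω) * g ω ∂μ = conj (∫ ω, f ω ∂μ) * ∫ ω, g ω ∂μ := by
  rw [← integral_conj]
  exact (h.comp RCLike.continuous_conj.measurable measurable_id).integral_fun_mul_eq_mul_integral
    (RCLike.continuous_conj.comp_aestronglyMeasurable hf) hg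

theorem stmt_12_general {Ω Ω' : Type*} [MeasurableSpace Ω] [MeasurableSpace Ω']
    (P : Measure Ω)
    (P' : Measure Ω')
    (x : ℝ → Ω → ℂ)
    (hL2 : ∀ t, MemLp (x t) 2 P)
    (M N : ℕ) (τ : Fin (M + 1) → ℝ) (d : Fin N → ℝ)
    (α : Fin (M + 1) → Ω' → ℂ) (a : Fin (M + 1) → ℝ)
    (hαL2 : ∀ m, MemLp (α m) 2 P')
    (hαcent : ∀ m : Fin (M + 1), m ≠ 0 → ∫ ω', α m ω' ∂P' = 0)
    (hαvar : ∀ m, ∫ ω', ‖α m ω'‖ ^ 2 ∂P' = a m ^ 2)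
    (hαindep : iIndepFun α P')
    (ε : Fin (M + 1) → ℝ)
    (hε : ∀ m, IsLeast
      {e : ℝ | ∃ w : Fin N → ℂ,
        e = ∫ ω, ‖x (-τ m) ω - ∑ n, w n * x (-d n) ω‖ ^ 2 ∂P} (ε m)) :
    ∫ ω', sInf {e : ℝ | ∃ w : Fin N → ℂ,
        e = ∫ ω, ‖∑ m, α m ω' * x (-τ m) ω - ∑ n, w n * x (-d n) ω‖ ^ 2 ∂P} ∂P'
      = ∑ m, a m ^ 2 * ε m := by
  let T m := (hL2 (-τ m)).toLp (x (-τ m))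
  let Q := (span ℂ (range fun n => (hL2 (-d n)).toLp (x (-d n))))ᗮ.starProjection
  have hε_eq m : ε m = ‖Q (T m)‖ ^ 2 :=
    (hε m).unique <|
      isLeast_integral_norm_sub_sum_mul_sq (fun n => hL2 (-d n)) (T m) (hL2 (-τ m)).coeFn_toLp
  have hmin ω' : sInf {e : ℝ | ∃ w : Fin N → ℂ,
      e = ∫ ω, ‖∑ m, α m ω' * x (-τ m) ω - ∑ n, w n * x (-d n) ω‖ ^ 2 ∂P}
      = ‖∑ m, α m ω' • Q (T m)‖ ^ 2 := by
    rw [(isLeast_integral_norm_sub_sum_mul_sq (fun n => hL2 (-d n)) (∑ m, α m ω' • T m)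
      (Lp.coeFn_sum_smul_toLp _ fun m => hL2 (-τ m))).csInf_eq, map_sum]
    simp only [map_smul, Q]
  have huncorr : Pairwise fun m k => ∫ ω', conj (α m ω') * α k ω' ∂P' = 0 := by
    intro m k hmk
    rw [(hαindep.indepFun hmk).integral_conj_mul (hαL2 m).aestronglyMeasurable
      (hαL2 k).aestronglyMeasurable]
    rcases eq_or_ne m 0 with rfl | hm
    · rw [hαcent k (Ne.symm hmk), mul_zero]
    · rw [hαcent m hm, map_zero, zero_mul]
  simp_rw [hmin, integral_norm_sum_smul_sq hαL2 huncorr, hαvar, hε_eq]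

/-- Multipath decomposition of the unconstrained MMSE: for a centered
wide-sense stationary process `x` with autocorrelation `sinc(Bτ)`, independent
channel coefficients `α_m` (with `α₀` deterministic equal to `a₀` and `α_m`
centered of variance `a_m²` for `m ≥ 1`), and per-path Wiener MMSE values
`ε̄²_m` attained by deterministic weights `wt_m`, the expectation over the
channel coefficients of the total unconstrained MMSE of approximating
`y(t) = Σ_m α_m x(t−τ_m)` by `(x(t−d₁),…,x(t−d_N))` equals `Σ_m a_m² ε̄²_m`. -/
theorem stmt_12 {Ω Ω' : Type*} [MeasurableSpace Ω] [MeasurableSpace Ω']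
    (P : Measure Ω) [IsProbabilityMeasure P]
    (P' : Measure Ω') [IsProbabilityMeasure P']
    (x : ℝ → Ω → ℂ) (B : ℝ) (hB : 0 < B)
    (hL2 : ∀ t, MemLp (x t) 2 P)
    (hcent : ∀ t, ∫ ω, x t ω ∂P = 0)
    (hcorr : ∀ t τ, ∫ ω, x t ω * (starRingEnd ℂ) (x (t + τ) ω) ∂P = (nsinc (B * τ) : ℂ))
    (M N : ℕ) (τ : Fin (M + 1) → ℝ) (d : Fin N → ℝ)
    (α : Fin (M + 1) → Ω' → ℂ) (a : Fin (M + 1) → ℝ)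
    (hαmeas : ∀ m, Measurable (α m))
    (hαL2 : ∀ m, MemLp (α m) 2 P')
    (hα0 : α 0 = fun _ => (a 0 : ℂ))
    (hαcent : ∀ m : Fin (M + 1), m ≠ 0 → ∫ ω', α m ω' ∂P' = 0)
    (hαvar : ∀ m, ∫ ω', ‖α m ω'‖ ^ 2 ∂P' = a m ^ 2)
    (hαindep : iIndepFun α P')
    (ε : Fin (M + 1) → ℝ) (wt : Fin (M + 1) → Fin N → ℂ)
    (hε : ∀ m, IsLeast
      {e : ℝ | ∃ w : Fin N → ℂ,
        e = ∫ ω, ‖x (-τ m) ω - ∑ n, w n * x (-d n) ω‖ ^ 2 ∂P} (ε m))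
    (hwt : ∀ m, ∫ ω, ‖x (-τ m) ω - ∑ n, wt m n * x (-d n) ω‖ ^ 2 ∂P = ε m) :
    ∫ ω', sInf {e : ℝ | ∃ w : Fin N → ℂ,
        e = ∫ ω, ‖∑ m, α m ω' * x (-τ m) ω - ∑ n, w n * x (-d n) ω‖ ^ 2 ∂P} ∂P'
      = ∑ m, a m ^ 2 * ε m :=
  stmt_12_general P P' x hL2 M N τ d α a hαL2 hαcent hαvar hαindep ε hε
end
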